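/- arXiv:1402.3658 — 2 statements merged into one kernel-verified Lean document; each statement's English description precedes it below -/
import Mathlib

section
/- Let P be a real 3×3 symmetric matrix, ξ a unit vector in ℝ³ with Pξ = 0, and let {u, v, n} be an orthonormal basis of ℝ³ with ⟨ξ, n⟩ ≠ 0. For any λ > 0, det(I + λP) = (λ/⟨ξ, n⟩)²·det M, where M is the 2×2 matrix with entries M_{11} = ⟨Pu,u⟩ + (1 − ⟨ξ,u⟩²)/λ, M_{12} = M_{21} = ⟨Pu,v⟩ − ⟨ξ,u⟩⟨ξ,v⟩/λ, M_{22} = ⟨Pv,v⟩ + (1 − ⟨ξ,v⟩²)/λ. -/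
/-!
Conjugating by the orthogonal matrix `Q` with rows `u, v, n` preserves `det (1 + λP)`, so `P` may
be replaced by the symmetric `B = Q P Qᵀ`, whose unit kernel vector is
`w = Q ξ = (⟨ξ,u⟩, ⟨ξ,v⟩, ⟨ξ,n⟩)`. Since `w 2 ≠ 0`, the relations `B w = 0` express the third row
and column of `B` through its upper left `2 × 2` block, and with `|w| = 1` the formula becomes a
polynomial identity in the remaining entries.
-/

open Matrix

section Conjugation

variable {ι R : Type*} [Fintype ι] [CommRing R]

theorem isSymm_mul_mul_transpose {A : Matrix ι ι R} (hA : A.IsSymm) (Q : Matrix ι ι R) :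
    (Q * A * Qᵀ).IsSymm := by
  rw [IsSymm, transpose_mul, transpose_mul, transpose_transpose, hA.eq, Matrix.mul_assoc]

variable {Q : Matrix ι ι R}

theorem mul_mul_transpose_apply_of_isSymm {A : Matrix ι ι R} (hA : A.IsSymm) (i j : ι) :
    (Q * A * Qᵀ) i j = A *ᵥ Q i ⬝ᵥ Q j := by
  rw [mul_apply', mul_apply_eq_vecMul, ← mulVec_transpose, hA.eq]
  rfl

theorem det_mul_mul_transpose_of_mul_transpose_eq_one [DecidableEq ι] (hQ : Q * Qᵀ = 1)
    (A : Matrix ι ι R) : (Q * A * Qᵀ).det = A.det := by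
  rw [← inv_eq_right_inv hQ, det_conj ((isUnit_iff_isUnit_det Q).mpr
    (isUnit_det_of_right_inverse hQ))]

theorem mul_one_add_smul_mul_transpose [DecidableEq ι] (hQ : Q * Qᵀ = 1) (c : R)
    (A : Matrix ι ι R) : Q * (1 + c • A) * Qᵀ = 1 + c • (Q * A * Qᵀ) := by
  rw [Matrix.mul_add, Matrix.add_mul, Matrix.mul_one, hQ, mul_smul_comm, smul_mul_assoc]

theorem mul_mul_transpose_mulVec_mulVec [DecidableEq ι] (hQ : Q * Qᵀ = 1) (A : Matrix ι ι R)
    (x : ι → R) : (Q * A * Qᵀ) *ᵥ (Q *ᵥ x) = Q *ᵥ (A *ᵥ x) := by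
  rw [mulVec_mulVec, Matrix.mul_assoc, Matrix.mul_assoc, mul_eq_one_comm.mp hQ, Matrix.mul_one,
    ← mulVec_mulVec]

theorem mulVec_dotProduct_mulVec_self [DecidableEq ι] (hQ : Q * Qᵀ = 1) (x : ι → R) :
    Q *ᵥ x ⬝ᵥ Q *ᵥ x = x ⬝ᵥ x := by
  rw [dotProduct_mulVec, ← vecMul_transpose, vecMul_vecMul, mul_eq_one_comm.mp hQ, vecMul_one]

end Conjugation

theorem of_mul_transpose_of_orthonormal {R : Type*} [CommRing R] {u v n : Fin 3 → R}
    (hu : u ⬝ᵥ u = 1) (hv : v ⬝ᵥ v = 1) (hn : n ⬝ᵥ n = 1)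
    (huv : u ⬝ᵥ v = 0) (hun : u ⬝ᵥ n = 0) (hvn : v ⬝ᵥ n = 0) :
    of ![u, v, n] * (of ![u, v, n])ᵀ = 1 := by
  ext i j
  change ![u, v, n] i ⬝ᵥ ![u, v, n] j = _
  fin_cases i <;> fin_cases j <;>
    simp [hu, hv, hn, huv, hun, hvn, dotProduct_comm _ u, dotProduct_comm n v]

theorem det_one_add_smul_of_isSymm_of_mulVec_eq_zero {K : Type*} [Field K]
    {B : Matrix (Fin 3) (Fin 3) K} (hB : B.IsSymm) {w : Fin 3 → K} (hw : w ⬝ᵥ w = 1)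
    (hBw : B *ᵥ w = 0) (hw2 : w 2 ≠ 0) {lam : K} (hlam : lam ≠ 0) :
    (1 + lam • B).det = (lam / w 2) ^ 2 *
      !![B 0 0 + (1 - w 0 ^ 2) / lam, B 0 1 - w 0 * w 1 / lam;
         B 0 1 - w 0 * w 1 / lam, B 1 1 + (1 - w 1 ^ 2) / lam].det := by
  have hrow (i : Fin 3) : B i 0 * w 0 + B i 1 * w 1 + B i 2 * w 2 = 0 := by
    simpa [mulVec, dotProduct, Fin.sum_univ_three] using congrFun hBw i
  have h0 := hrow 0
  have h1 := hrow 1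
  have h2 := hrow 2
  simp only [dotProduct, Fin.sum_univ_three] at hw
  simp only [det_fin_three, det_fin_two_of, Matrix.add_apply, Matrix.smul_apply, one_apply_eq,
    smul_eq_mul, one_apply_ne, ne_eq, Fin.reduceEq, not_false_eq_true]
  simp only [hB.apply 0 1, hB.apply 0 2, hB.apply 1 2] at h1 h2 ⊢
  have hB02 : B 0 2 = -(w 0 * B 0 0 + w 1 * B 0 1) / w 2 := by
    field_simp
    linear_combination h0
  have hB12 : B 1 2 = -(w 0 * B 0 1 + w 1 * B 1 1) / w 2 := by
    field_simp
    linear_combination h1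
  have hB22 : B 2 2 = (w 0 ^ 2 * B 0 0 + 2 * w 0 * w 1 * B 0 1 + w 1 ^ 2 * B 1 1) / w 2 ^ 2 := by
    field_simp
    linear_combination w 2 * h2 - w 0 * h0 - w 1 * h1
  rw [hB02, hB12, hB22]
  field_simp
  linear_combination (1 + (B 0 0 + B 1 1) * lam + (B 0 0 * B 1 1 - B 0 1 ^ 2) * lam ^ 2) * hw

/-- Formula (5) of Lemma 2: for a symmetric `P` with `Pξ = 0`, `ξ` unit, `{u,v,n}` an
orthonormal basis with `⟨ξ,n⟩ ≠ 0` and `λ > 0`,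
`det(I + λP) = (λ/⟨ξ,n⟩)² det M` with `M` the tangential 2×2 Hessian matrix. -/
theorem det_one_add_smul_eq_det_M (P : Matrix (Fin 3) (Fin 3) ℝ) (hsymm : P.IsSymm)
    (ξ u v n : Fin 3 → ℝ)
    (hξ : ξ ⬝ᵥ ξ = 1) (hPξ : P.mulVec ξ = 0)
    (hu : u ⬝ᵥ u = 1) (hv : v ⬝ᵥ v = 1) (hn : n ⬝ᵥ n = 1)
    (huv : u ⬝ᵥ v = 0) (hun : u ⬝ᵥ n = 0) (hvn : v ⬝ᵥ n = 0)
    (hξn : ξ ⬝ᵥ n ≠ 0) (lam : ℝ) (hlam : 0 < lam) :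
    ((1 : Matrix (Fin 3) (Fin 3) ℝ) + lam • P).det =
      (lam / (ξ ⬝ᵥ n))^2 *
        (!![P.mulVec u ⬝ᵥ u + (1 - (ξ ⬝ᵥ u)^2) / lam,
            P.mulVec u ⬝ᵥ v - (ξ ⬝ᵥ u) * (ξ ⬝ᵥ v) / lam;
            P.mulVec u ⬝ᵥ v - (ξ ⬝ᵥ u) * (ξ ⬝ᵥ v) / lam,
            P.mulVec v ⬝ᵥ v + (1 - (ξ ⬝ᵥ v)^2) / lam] : Matrix (Fin 2) (Fin 2) ℝ).det := by
  set Q := of ![u, v, n]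
  have hQ : Q * Qᵀ = 1 := of_mul_transpose_of_orthonormal hu hv hn huv hun hvn
  have hQξ : Q *ᵥ ξ = ![ξ ⬝ᵥ u, ξ ⬝ᵥ v, ξ ⬝ᵥ n] := by
    ext i
    fin_cases i <;> exact dotProduct_comm _ _
  have key := det_one_add_smul_of_isSymm_of_mulVec_eq_zero (isSymm_mul_mul_transpose hsymm Q)
    (mulVec_dotProduct_mulVec_self hQ ξ ▸ hξ)
    (by rw [mul_mul_transpose_mulVec_mulVec hQ, hPξ, mulVec_zero]) (by simpa [hQξ]) hlam.ne'
  rw [← det_mul_mul_transpose_of_mul_transpose_eq_one hQ, mul_one_add_smul_mul_transpose hQ, key]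
  simp only [hQξ, mul_mul_transpose_apply_of_isSymm hsymm]
  rfl
end

section
/- Under the hypotheses of the preceding statement (P symmetric, Pξ = 0, |ξ| = 1, {u,v,n} orthonormal with ⟨ξ,n⟩ ≠ 0, λ > 0), if additionally P is positive semidefinite then det M > 0 and tr M > 0, so the 2×2 matrix M is invertible with signature 2 (both eigenvalues positive). -/
/-!
Write `w = (⟨ξ,u⟩, ⟨ξ,v⟩)`. Then `M = G + λ⁻¹ (I - w wᵀ)`, where `G` is the Gram matrix of `P`
on `span {u, v}`, positive semidefinite since `P` is. By Bessel's inequality for the orthonormal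
triple `u, v, n`, `|w|² ≤ 1 - ⟨ξ,n⟩² < 1`, so `I - w wᵀ` is positive definite by Cauchy–Schwarz.
Hence `M` is positive definite.
-/

open Matrix

variable {ι : Type*} [Fintype ι]

theorem dotProduct_sq_add_sq_add_sq_le {R : Type*} [CommRing R] [LinearOrder R]
    [IsStrictOrderedRing R] {ξ u v n : ι → R}
    (hu : u ⬝ᵥ u = 1) (hv : v ⬝ᵥ v = 1) (hn : n ⬝ᵥ n = 1)
    (huv : u ⬝ᵥ v = 0) (hun : u ⬝ᵥ n = 0) (hvn : v ⬝ᵥ n = 0) :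
    (ξ ⬝ᵥ u) ^ 2 + (ξ ⬝ᵥ v) ^ 2 + (ξ ⬝ᵥ n) ^ 2 ≤ ξ ⬝ᵥ ξ := by
  set r := ξ - (ξ ⬝ᵥ u) • u - (ξ ⬝ᵥ v) • v - (ξ ⬝ᵥ n) • n
  have hr : r ⬝ᵥ r = ξ ⬝ᵥ ξ - ((ξ ⬝ᵥ u) ^ 2 + (ξ ⬝ᵥ v) ^ 2 + (ξ ⬝ᵥ n) ^ 2) := by
    simp only [r, dotProduct_sub, sub_dotProduct, dotProduct_smul, smul_dotProduct, smul_eq_mul,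
      dotProduct_comm u ξ, dotProduct_comm v ξ, dotProduct_comm n ξ, dotProduct_comm v u,
      dotProduct_comm n u, dotProduct_comm n v, hu, hv, hn, huv, hun, hvn]
    ring
  exact sub_nonneg.mp (hr ▸ Finset.sum_nonneg fun i _ => mul_self_nonneg (r i))

theorem Matrix.posDef_one_sub_vecMulVec_self [DecidableEq ι] {w : ι → ℝ} (hw : w ⬝ᵥ w < 1) :
    (1 - vecMulVec w w).PosDef := by
  refine posDef_iff_dotProduct_mulVec.mpr ⟨?_, fun x hx => ?_⟩
  · simp [IsHermitian]
  have hquad : star x ⬝ᵥ (1 - vecMulVec w w) *ᵥ x = x ⬝ᵥ x - (w ⬝ᵥ x) ^ 2 := by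
    simp [sub_mulVec, vecMulVec_mulVec, dotProduct_comm x w, sq]
  have hcs : (w ⬝ᵥ x) ^ 2 ≤ (w ⬝ᵥ w) * (x ⬝ᵥ x) := by
    simpa [dotProduct, sq] using Finset.sum_mul_sq_le_sq_mul_sq Finset.univ w x
  have hx : 0 < x ⬝ᵥ x := by simpa using dotProduct_star_self_pos_iff.mpr hx
  rw [hquad]
  nlinarith

theorem Matrix.PosSemidef.gram {m : Type*} [Fintype m] {P : Matrix ι ι ℝ} (hP : P.PosSemidef)
    (w : m → ι → ℝ) :
    (of fun i j => w i ⬝ᵥ P *ᵥ w j).PosSemidef := by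
  convert hP.conjTranspose_mul_mul_same (of fun k i => w i k) using 1
  ext i j
  simp only [conjTranspose_eq_transpose_of_trivial, mul_apply, transpose_apply, of_apply,
    dotProduct, mulVec, Finset.mul_sum, mul_comm, mul_left_comm]
  exact Finset.sum_comm

theorem Matrix.PosSemidef.gram_two {P : Matrix ι ι ℝ} (hP : P.PosSemidef) (u v : ι → ℝ) :
    !![P *ᵥ u ⬝ᵥ u, P *ᵥ u ⬝ᵥ v; P *ᵥ u ⬝ᵥ v, P *ᵥ v ⬝ᵥ v].PosSemidef := by
  have hsymm : v ⬝ᵥ P *ᵥ u = u ⬝ᵥ P *ᵥ v := by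
    rw [dotProduct_mulVec, ← mulVec_transpose, ← conjTranspose_eq_transpose_of_trivial,
      hP.isHermitian.eq, dotProduct_comm]
  convert hP.gram ![u, v] using 1
  ext i j
  fin_cases i <;> fin_cases j <;> simp [dotProduct_comm (P *ᵥ _), hsymm]

theorem M_posdef_general (P : Matrix (Fin 3) (Fin 3) ℝ) (hP : P.PosSemidef)
    (ξ u v n : Fin 3 → ℝ)
    (hξ : ξ ⬝ᵥ ξ = 1)
    (hu : u ⬝ᵥ u = 1) (hv : v ⬝ᵥ v = 1) (hn : n ⬝ᵥ n = 1)
    (huv : u ⬝ᵥ v = 0) (hun : u ⬝ᵥ n = 0) (hvn : v ⬝ᵥ n = 0)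
    (hξn : ξ ⬝ᵥ n ≠ 0) (lam : ℝ) (hlam : 0 < lam) :
    0 < (!![P.mulVec u ⬝ᵥ u + (1 - (ξ ⬝ᵥ u)^2) / lam,
            P.mulVec u ⬝ᵥ v - (ξ ⬝ᵥ u) * (ξ ⬝ᵥ v) / lam;
            P.mulVec u ⬝ᵥ v - (ξ ⬝ᵥ u) * (ξ ⬝ᵥ v) / lam,
            P.mulVec v ⬝ᵥ v + (1 - (ξ ⬝ᵥ v)^2) / lam] : Matrix (Fin 2) (Fin 2) ℝ).det ∧
    0 < (!![P.mulVec u ⬝ᵥ u + (1 - (ξ ⬝ᵥ u)^2) / lam,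
            P.mulVec u ⬝ᵥ v - (ξ ⬝ᵥ u) * (ξ ⬝ᵥ v) / lam;
            P.mulVec u ⬝ᵥ v - (ξ ⬝ᵥ u) * (ξ ⬝ᵥ v) / lam,
            P.mulVec v ⬝ᵥ v + (1 - (ξ ⬝ᵥ v)^2) / lam] : Matrix (Fin 2) (Fin 2) ℝ).trace ∧
    IsUnit (!![P.mulVec u ⬝ᵥ u + (1 - (ξ ⬝ᵥ u)^2) / lam,
            P.mulVec u ⬝ᵥ v - (ξ ⬝ᵥ u) * (ξ ⬝ᵥ v) / lam;
            P.mulVec u ⬝ᵥ v - (ξ ⬝ᵥ u) * (ξ ⬝ᵥ v) / lam,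
            P.mulVec v ⬝ᵥ v + (1 - (ξ ⬝ᵥ v)^2) / lam] : Matrix (Fin 2) (Fin 2) ℝ) ∧
    (!![P.mulVec u ⬝ᵥ u + (1 - (ξ ⬝ᵥ u)^2) / lam,
            P.mulVec u ⬝ᵥ v - (ξ ⬝ᵥ u) * (ξ ⬝ᵥ v) / lam;
            P.mulVec u ⬝ᵥ v - (ξ ⬝ᵥ u) * (ξ ⬝ᵥ v) / lam,
            P.mulVec v ⬝ᵥ v + (1 - (ξ ⬝ᵥ v)^2) / lam] : Matrix (Fin 2) (Fin 2) ℝ).PosDef := by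
  set w : Fin 2 → ℝ := ![ξ ⬝ᵥ u, ξ ⬝ᵥ v]
  have hw : w ⬝ᵥ w < 1 := by
    have hbessel := dotProduct_sq_add_sq_add_sq_le (ξ := ξ) hu hv hn huv hun hvn
    have hww : w ⬝ᵥ w = (ξ ⬝ᵥ u) ^ 2 + (ξ ⬝ᵥ v) ^ 2 := by simp [w, dotProduct, sq]
    have hr : 0 < (ξ ⬝ᵥ n) ^ 2 := by positivity
    linarith
  set M : Matrix (Fin 2) (Fin 2) ℝ := !![P *ᵥ u ⬝ᵥ u + (1 - (ξ ⬝ᵥ u) ^ 2) / lam,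
      P *ᵥ u ⬝ᵥ v - (ξ ⬝ᵥ u) * (ξ ⬝ᵥ v) / lam;
      P *ᵥ u ⬝ᵥ v - (ξ ⬝ᵥ u) * (ξ ⬝ᵥ v) / lam,
      P *ᵥ v ⬝ᵥ v + (1 - (ξ ⬝ᵥ v) ^ 2) / lam]
  have hdecomp : M =
      !![P *ᵥ u ⬝ᵥ u, P *ᵥ u ⬝ᵥ v; P *ᵥ u ⬝ᵥ v, P *ᵥ v ⬝ᵥ v] + lam⁻¹ • (1 - vecMulVec w w) := by
    ext i j
    fin_cases i <;> fin_cases j <;> simp [M, w, vecMulVec] <;> ring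
  have hM : M.PosDef := hdecomp ▸ PosDef.posSemidef_add (hP.gram_two u v)
    ((posDef_one_sub_vecMulVec_self hw).smul (inv_pos.mpr hlam))
  exact ⟨hM.det_pos, hM.trace_pos, hM.isUnit, hM⟩

/-- Under the hypotheses of Lemma 2, if `P` is moreover positive semidefinite then the 2×2
tangential Hessian `M` has positive determinant and positive trace, hence is invertible with
signature 2 (both eigenvalues positive, i.e. `M` is positive definite). -/
theorem M_posdef (P : Matrix (Fin 3) (Fin 3) ℝ) (hP : P.PosSemidef)
    (ξ u v n : Fin 3 → ℝ)
    (hξ : ξ ⬝ᵥ ξ = 1) (hPξ : P.mulVec ξ = 0)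
    (hu : u ⬝ᵥ u = 1) (hv : v ⬝ᵥ v = 1) (hn : n ⬝ᵥ n = 1)
    (huv : u ⬝ᵥ v = 0) (hun : u ⬝ᵥ n = 0) (hvn : v ⬝ᵥ n = 0)
    (hξn : ξ ⬝ᵥ n ≠ 0) (lam : ℝ) (hlam : 0 < lam) :
    0 < (!![P.mulVec u ⬝ᵥ u + (1 - (ξ ⬝ᵥ u)^2) / lam,
            P.mulVec u ⬝ᵥ v - (ξ ⬝ᵥ u) * (ξ ⬝ᵥ v) / lam;
            P.mulVec u ⬝ᵥ v - (ξ ⬝ᵥ u) * (ξ ⬝ᵥ v) / lam,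
            P.mulVec v ⬝ᵥ v + (1 - (ξ ⬝ᵥ v)^2) / lam] : Matrix (Fin 2) (Fin 2) ℝ).det ∧
    0 < (!![P.mulVec u ⬝ᵥ u + (1 - (ξ ⬝ᵥ u)^2) / lam,
            P.mulVec u ⬝ᵥ v - (ξ ⬝ᵥ u) * (ξ ⬝ᵥ v) / lam;
            P.mulVec u ⬝ᵥ v - (ξ ⬝ᵥ u) * (ξ ⬝ᵥ v) / lam,
            P.mulVec v ⬝ᵥ v + (1 - (ξ ⬝ᵥ v)^2) / lam] : Matrix (Fin 2) (Fin 2) ℝ).trace ∧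
    IsUnit (!![P.mulVec u ⬝ᵥ u + (1 - (ξ ⬝ᵥ u)^2) / lam,
            P.mulVec u ⬝ᵥ v - (ξ ⬝ᵥ u) * (ξ ⬝ᵥ v) / lam;
            P.mulVec u ⬝ᵥ v - (ξ ⬝ᵥ u) * (ξ ⬝ᵥ v) / lam,
            P.mulVec v ⬝ᵥ v + (1 - (ξ ⬝ᵥ v)^2) / lam] : Matrix (Fin 2) (Fin 2) ℝ) ∧
    (!![P.mulVec u ⬝ᵥ u + (1 - (ξ ⬝ᵥ u)^2) / lam,
            P.mulVec u ⬝ᵥ v - (ξ ⬝ᵥ u) * (ξ ⬝ᵥ v) / lam;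
            P.mulVec u ⬝ᵥ v - (ξ ⬝ᵥ u) * (ξ ⬝ᵥ v) / lam,
            P.mulVec v ⬝ᵥ v + (1 - (ξ ⬝ᵥ v)^2) / lam] : Matrix (Fin 2) (Fin 2) ℝ).PosDef :=
  M_posdef_general P hP ξ u v n hξ hu hv hn huv hun hvn hξn lam hlam
end
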